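/- In the stock-market problem with 0 < ε < min(1/2, min_{1≤j≤k} q_j), let (X₁, X₂, X̂₂) have the joint distribution in which X₁ is distributed according to the stationary distribution (π_0,…,π_k) of the chain, X₂ follows the Markov transition P(x₂|x₁), and X̂₂ given (X₁, X₂) is distributed according to Table III. Then the expected per-letter distortion satisfies E[ e(X̂₂, X₁, X₂) ] = (1 − π_0) ε. -/

import Mathlib

/-!
Condition on `X₁ = j`. For `j = 0` Table III never predicts a drop and no drop can occur, so
there is no error. For `j ≥ 1` an error occurs when the chain drops (probability `q_j`) and
`X̂₂ = 0`, or when it moves within `{j, j+1}` (probability `1 - q_j`) and `X̂₂ = 1`. Table III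
assigns one success probability to each of these two cases, and they are chosen so that
`q_j (1 - P(X̂₂ = 1 | j, j-1)) + (1 - q_j) P(X̂₂ = 1 | j, j) = ε`. Averaging over `X₁ ~ π`
gives `(1 - π₀) ε`.
-/

open Finset

/-- Transition matrix of the stock-market birth-death chain on `{0,…,k}`:
`i → i+1` with probability `p i`, `i → i-1` with probability `q i`,
`i → i` with probability `1 - p i - q i`. -/
noncomputable def stockTrans (k : ℕ) (p q : Fin (k + 1) → ℝ) (i j : Fin (k + 1)) : ℝ :=
  if (j : ℕ) = (i : ℕ) + 1 then p i
  else if (i : ℕ) = (j : ℕ) + 1 then q i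
  else if i = j then 1 - p i - q i
  else 0

/-- The parameters of the stock chain: all transition probabilities strictly positive
where defined (no up-move from state `k`, no down-move from state `0`). -/
def IsStockChain (k : ℕ) (p q : Fin (k + 1) → ℝ) : Prop :=
  (∀ i : Fin (k + 1), (i : ℕ) < k → 0 < p i) ∧ p (Fin.last k) = 0 ∧
    (∀ i : Fin (k + 1), 0 < (i : ℕ) → 0 < q i) ∧ q 0 = 0 ∧
    ∀ i : Fin (k + 1), 0 < 1 - p i - q i

/-- Per-letter distortion: an error occurs if the investor fails to predict a drop
(`x_i = x_{i-1} - 1` but `x̂_i = false`) or falsely predicts a drop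
(`x_i ≥ x_{i-1}` but `x̂_i = true`). -/
def stockDist (k : ℕ) (b : Bool) (xp xc : Fin (k + 1)) : ℝ :=
  if (b = false ∧ (xc : ℕ) + 1 = (xp : ℕ)) ∨ (b = true ∧ (xp : ℕ) ≤ (xc : ℕ)) then 1 else 0

/-- Table II: the reverse test channel `P(X_i = x_cur | X_{i-1} = x_prev, X̂_i = b)`. -/
noncomputable def tableII (k : ℕ) (p q : Fin (k + 1) → ℝ) (ε : ℝ)
    (xp : Fin (k + 1)) (b : Bool) (xc : Fin (k + 1)) : ℝ :=
  if (xp : ℕ) = 0 then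
    (if b then 0
     else if (xc : ℕ) = 0 then 1 - p 0
     else if (xc : ℕ) = 1 then p 0
     else 0)
  else if b then
    (if (xc : ℕ) + 1 = (xp : ℕ) then 1 - ε
     else if xc = xp then ε * (1 - p xp - q xp) / (1 - q xp)
     else if (xc : ℕ) = (xp : ℕ) + 1 then ε * p xp / (1 - q xp)
     else 0)
  else
    (if (xc : ℕ) + 1 = (xp : ℕ) then ε
     else if xc = xp then (1 - ε) * (1 - p xp - q xp) / (1 - q xp)
     else if (xc : ℕ) = (xp : ℕ) + 1 then (1 - ε) * p xp / (1 - q xp)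
     else 0)

/-- `π` is a stationary distribution for the stock chain. -/
def IsStationaryDist (k : ℕ) (p q : Fin (k + 1) → ℝ) (π : Fin (k + 1) → ℝ) : Prop :=
  (∀ i, 0 ≤ π i) ∧ (∑ i, π i = 1) ∧ ∀ j, π j = ∑ i, π i * stockTrans k p q i j

/-- Table III: the probability `P(X̂₂ = 1 | x₁, x₂)`. -/
noncomputable def tableIII (k : ℕ) (q : Fin (k + 1) → ℝ) (ε : ℝ)
    (x₁ x₂ : Fin (k + 1)) : ℝ :=
  if (x₁ : ℕ) = 0 then 0
  else if (x₂ : ℕ) + 1 = (x₁ : ℕ) then (1 - ε) * (q x₁ - ε) / (q x₁ * (1 - 2 * ε))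
  else if x₂ = x₁ ∨ (x₂ : ℕ) = (x₁ : ℕ) + 1 then
    ε * (q x₁ - ε) / ((1 - q x₁) * (1 - 2 * ε))
  else 0

theorem sum_bernoulli_mul_stockDist (k : ℕ) (t : ℝ) (x₁ x₂ : Fin (k + 1)) :
    ∑ b : Bool, (if b then t else 1 - t) * stockDist k b x₁ x₂ =
      if (x₂ : ℕ) + 1 = x₁ then 1 - t else if (x₁ : ℕ) ≤ x₂ then t else 0 := by
  simp only [Fintype.sum_bool, stockDist]
  split_ifs <;> simp_all; omega

theorem stockTrans_mul_eq (k : ℕ) (p q : Fin (k + 1) → ℝ) (i x : Fin (k + 1))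
    (f : Fin (k + 1) → ℝ) (a c : ℝ)
    (ha : ∀ x : Fin (k + 1), (x : ℕ) + 1 = i → f x = a)
    (hc : ∀ x : Fin (k + 1), (x : ℕ) = i ∨ (x : ℕ) = i + 1 → f x = c) :
    stockTrans k p q i x * f x =
      (if (x : ℕ) + 1 = i then q i * a else 0) +
        (if (x : ℕ) = i then (1 - p i - q i) * c else 0) +
        (if (x : ℕ) = i + 1 then p i * c else 0) := by
  unfold stockTrans
  simp only [Fin.ext_iff]
  split_ifs <;> first | omega | simp [ha x (by omega)] | simp [hc x (by omega)] | simp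

theorem sum_stockTrans_mul (k : ℕ) (p q : Fin (k + 1) → ℝ) (hpk : p (Fin.last k) = 0)
    (hq0 : q 0 = 0) (i : Fin (k + 1)) (f : Fin (k + 1) → ℝ) (a c : ℝ)
    (ha : ∀ x : Fin (k + 1), (x : ℕ) + 1 = i → f x = a)
    (hc : ∀ x : Fin (k + 1), (x : ℕ) = i ∨ (x : ℕ) = i + 1 → f x = c) :
    ∑ x, stockTrans k p q i x * f x = q i * a + (1 - q i) * c := by
  simp only [stockTrans_mul_eq k p q i _ f a c ha hc, sum_add_distrib]
  rw [Fin.sum_univ_eq_sum_range (fun n => if n + 1 = (i : ℕ) then q i * a else 0),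
    Fin.sum_univ_eq_sum_range (fun n => if n = (i : ℕ) then (1 - p i - q i) * c else 0),
    Fin.sum_univ_eq_sum_range (fun n => if n = (i : ℕ) + 1 then p i * c else 0)]
  simp only [sum_ite_eq', mem_range]
  have hdown : (∑ n ∈ range (k + 1), if n + 1 = (i : ℕ) then q i * a else 0) = q i * a := by
    rcases Nat.eq_zero_or_eq_succ_pred i with h | h
    · simp [show i = 0 from Fin.ext h, hq0]
    · rw [h]
      simp only [Nat.succ_eq_add_one, add_left_inj, sum_ite_eq', mem_range]
      exact if_pos (by omega)
  have hup : (if (i : ℕ) + 1 < k + 1 then p i * c else 0) = p i * c := by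
    split_ifs with h
    · rfl
    · rw [show i = Fin.last k from Fin.ext (by simp only [Fin.val_last]; omega), hpk, zero_mul]
  rw [hdown, hup, if_pos i.isLt]
  ring

theorem IsStockChain.q_lt_one {k : ℕ} {p q : Fin (k + 1) → ℝ} (h : IsStockChain k p q)
    (i : Fin (k + 1)) : q i < 1 := by
  obtain ⟨hp, hpk, -, -, hpq⟩ := h
  have hpi : 0 ≤ p i := by
    rcases (Nat.lt_succ_iff.mp i.isLt).lt_or_eq with hi | hi
    · exact (hp i hi).le
    · rw [show i = Fin.last k from Fin.ext hi, hpk]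
  linarith [hpq i]

theorem tableIII_error_balance {q ε : ℝ} (hq : q ≠ 0) (hq1 : 1 - q ≠ 0)
    (hε : 1 - 2 * ε ≠ 0) :
    q * (1 - (1 - ε) * (q - ε) / (q * (1 - 2 * ε))) +
      (1 - q) * (ε * (q - ε) / ((1 - q) * (1 - 2 * ε))) = ε := by
  -- otherwise `field_simp` rewrites `1 - 2 * ε` to `1 - ε * 2` and loses `hε`
  generalize hd : 1 - 2 * ε = d at hε ⊢
  field_simp
  linear_combination (ε - q) * hd

noncomputable def stockCondDistortion (k : ℕ) (p q : Fin (k + 1) → ℝ) (ε : ℝ)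
    (x₁ : Fin (k + 1)) : ℝ :=
  ∑ x₂, stockTrans k p q x₁ x₂ * ∑ b : Bool,
    (if b then tableIII k q ε x₁ x₂ else 1 - tableIII k q ε x₁ x₂) *
      stockDist k b x₁ x₂

theorem stockCondDistortion_zero (k : ℕ) (p q : Fin (k + 1) → ℝ) (ε : ℝ) :
    stockCondDistortion k p q ε 0 = 0 := by
  simp only [stockCondDistortion, sum_bernoulli_mul_stockDist]
  simp [tableIII]

theorem stockCondDistortion_succ {k : ℕ} {p q : Fin (k + 1) → ℝ} (hchain : IsStockChain k p q)
    {ε : ℝ} (hε : ε < 1 / 2) (i : Fin k) : stockCondDistortion k p q ε i.succ = ε := by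
  have hq1 := hchain.q_lt_one i.succ
  obtain ⟨-, hpk, hq, hq0, -⟩ := hchain
  have hi : (i.succ : ℕ) ≠ 0 := by simp
  rw [stockCondDistortion, sum_stockTrans_mul k p q hpk hq0 i.succ _
    (1 - (1 - ε) * (q i.succ - ε) / (q i.succ * (1 - 2 * ε)))
    (ε * (q i.succ - ε) / ((1 - q i.succ) * (1 - 2 * ε)))]
  · exact tableIII_error_balance (hq _ i.succ_pos).ne'
      (sub_ne_zero.mpr hq1.ne') (by linarith)
  · intro x hx
    rw [sum_bernoulli_mul_stockDist, if_pos hx, tableIII, if_neg hi, if_pos hx]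
  · intro x hx
    rw [sum_bernoulli_mul_stockDist, if_neg (by omega), if_pos (by omega), tableIII, if_neg hi,
      if_neg (by omega), if_pos (by simpa only [Fin.ext_iff] using hx)]

theorem stock_expected_distortion_general
    (k : ℕ) (p q π : Fin (k + 1) → ℝ)
    (hchain : IsStockChain k p q) (hπ : IsStationaryDist k p q π)
    (ε : ℝ) (hε : ε < 1 / 2) :
    ∑ x₁ : Fin (k + 1), ∑ x₂ : Fin (k + 1), ∑ b : Bool,
        π x₁ * stockTrans k p q x₁ x₂ *
          (if b then tableIII k q ε x₁ x₂ else 1 - tableIII k q ε x₁ x₂) *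
          stockDist k b x₁ x₂ =
      (1 - π 0) * ε := by
  obtain ⟨-, hπ1, -⟩ := hπ
  have hcond : ∀ x₁, (∑ x₂ : Fin (k + 1), ∑ b : Bool,
      π x₁ * stockTrans k p q x₁ x₂ *
        (if b then tableIII k q ε x₁ x₂ else 1 - tableIII k q ε x₁ x₂) *
        stockDist k b x₁ x₂) =
      π x₁ * stockCondDistortion k p q ε x₁ := by
    intro x₁
    simp only [stockCondDistortion, mul_sum]
    exact sum_congr rfl fun x₂ _ => sum_congr rfl fun b _ => by ring
  simp only [hcond, Fin.sum_univ_succ, stockCondDistortion_zero,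
    stockCondDistortion_succ hchain hε, ← sum_mul]
  rw [Fin.sum_univ_succ] at hπ1
  rw [show ∑ i : Fin k, π i.succ = 1 - π 0 by linarith]
  ring

/-- **Expected distortion.**  Under the joint law in which `X₁ ~ π`, `X₂` follows the
Markov transition and `X̂₂` given `(X₁, X₂)` is Bernoulli with Table III success
probability, the expected per-letter distortion is `(1 - π₀) ε`. -/
theorem stock_expected_distortion
    (k : ℕ) (hk : 0 < k) (p q π : Fin (k + 1) → ℝ)
    (hchain : IsStockChain k p q) (hπ : IsStationaryDist k p q π)
    (ε : ℝ) (hε0 : 0 < ε) (hε : ε < 1 / 2)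
    (hεq : ∀ j : Fin (k + 1), 0 < (j : ℕ) → ε < q j) :
    ∑ x₁ : Fin (k + 1), ∑ x₂ : Fin (k + 1), ∑ b : Bool,
        π x₁ * stockTrans k p q x₁ x₂ *
          (if b then tableIII k q ε x₁ x₂ else 1 - tableIII k q ε x₁ x₂) *
          stockDist k b x₁ x₂ =
      (1 - π 0) * ε :=
  stock_expected_distortion_general k p q π hchain hπ ε hε
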